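/- Let m > 0, β > 0 and a > 0, and let the differential cross-section be that of the low-energy four-fermion electroweak interaction, σ(g, Θ) = a·(g² + 4m²) (independent of Θ). Then the interaction is hard: there exists ν₀ > 0 such that the collision frequency satisfies ν(p) ≥ ν₀ · E(p)/m for all p ∈ ℝ³; in particular ν(p) is bounded away from zero, so a relaxation time approximation with a uniform gap is admissible. -/

import Mathlib

open MeasureTheory Real RealInnerProductSpace

/-- Relativistic energy `E(p) = √(‖p‖² + m²)`. -/
noncomputable def energy (m : ℝ) (p : EuclideanSpace ℝ (Fin 3)) : ℝ :=
  Real.sqrt (‖p‖ ^ 2 + m ^ 2)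

/-- Relative momentum `g(p,q) = √(2(E(p)E(q) − ⟨p,q⟩ − m²))`. -/
noncomputable def relMom (m : ℝ) (p q : EuclideanSpace ℝ (Fin 3)) : ℝ :=
  Real.sqrt (2 * (energy m p * energy m q - ⟪p, q⟫ - m ^ 2))

/-- Total cross-section `σ_T(g) = 2π ∫_0^π σ(g,Θ) sin Θ dΘ`. -/
noncomputable def totalXsec (σ : ℝ → ℝ → ℝ) (g : ℝ) : ℝ :=
  2 * Real.pi * ∫ Θ in (0:ℝ)..Real.pi, σ g Θ * Real.sin Θ

/-- Collision frequency
`ν(p) = E(p)⁻¹ ∫ (e^{−βE(q)}/E(q)) g(p,q) √(g(p,q)² + 4m²) σ_T(g(p,q)) dq`. -/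
noncomputable def collFreq (m β : ℝ) (σ : ℝ → ℝ → ℝ) (p : EuclideanSpace ℝ (Fin 3)) : ℝ :=
  (energy m p)⁻¹ * ∫ q : EuclideanSpace ℝ (Fin 3),
    (Real.exp (-β * energy m q) / energy m q) * relMom m p q *
      Real.sqrt ((relMom m p q) ^ 2 + 4 * m ^ 2) * totalXsec σ (relMom m p q)

set_option linter.unusedSectionVars false
set_option linter.unusedVariables false

section aux

variable {m : ℝ} (hm : 0 < m)
include hm

lemma energy_pos (p : EuclideanSpace ℝ (Fin 3)) : 0 < energy m p :=
  Real.sqrt_pos.mpr (by positivity)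

lemma le_energy (p : EuclideanSpace ℝ (Fin 3)) : m ≤ energy m p := by
  rw [energy]
  exact Real.le_sqrt_of_sq_le (by nlinarith [sq_nonneg ‖p‖])

lemma norm_le_energy (p : EuclideanSpace ℝ (Fin 3)) : ‖p‖ ≤ energy m p := by
  rw [energy]
  exact Real.le_sqrt_of_sq_le (by nlinarith [sq_nonneg m])

lemma energy_le (p : EuclideanSpace ℝ (Fin 3)) : energy m p ≤ ‖p‖ + m := by
  rw [energy, show ‖p‖ + m = Real.sqrt ((‖p‖ + m) ^ 2) from (Real.sqrt_sq (by positivity)).symm]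
  refine Real.sqrt_le_sqrt ?_
  nlinarith [norm_nonneg p, hm.le]

lemma energy_mul_ge (p q : EuclideanSpace ℝ (Fin 3)) :
    ‖p‖ * ‖q‖ + m ^ 2 ≤ energy m p * energy m q := by
  rw [energy, energy, ← Real.sqrt_mul (by positivity)]
  rw [show ‖p‖ * ‖q‖ + m ^ 2 = Real.sqrt ((‖p‖ * ‖q‖ + m ^ 2) ^ 2) from
    (Real.sqrt_sq (by positivity)).symm]
  refine Real.sqrt_le_sqrt ?_
  nlinarith [sq_nonneg (‖p‖ - ‖q‖), hm.le, norm_nonneg p, norm_nonneg q]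

lemma relMom_arg_nonneg (p q : EuclideanSpace ℝ (Fin 3)) :
    0 ≤ energy m p * energy m q - ⟪p, q⟫ - m ^ 2 := by
  have h1 := energy_mul_ge hm p q
  have h2 := real_inner_le_norm p q
  linarith

lemma relMom_nonneg (p q : EuclideanSpace ℝ (Fin 3)) : 0 ≤ relMom m p q :=
  Real.sqrt_nonneg _

lemma relMom_sq (p q : EuclideanSpace ℝ (Fin 3)) :
    relMom m p q ^ 2 = 2 * (energy m p * energy m q - ⟪p, q⟫ - m ^ 2) := by
  rw [relMom, Real.sq_sqrt (by nlinarith [relMom_arg_nonneg hm p q])]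

lemma relMom_sq_le (p q : EuclideanSpace ℝ (Fin 3)) :
    relMom m p q ^ 2 ≤ 4 * (energy m p * energy m q) := by
  rw [relMom_sq hm]
  have h2 := abs_real_inner_le_norm p q
  have h3 := energy_mul_ge hm p q
  have := abs_le.mp h2
  nlinarith [hm, norm_nonneg p, norm_nonneg q, sq_nonneg m]

omit hm in
lemma le_of_sq_le_sq' {x y : ℝ} (hx : 0 ≤ x) (hy : 0 ≤ y) (h : x ^ 2 ≤ y ^ 2) : x ≤ y := by
  nlinarith

omit hm in
lemma totalXsec_ff (a m g : ℝ) :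
    totalXsec (fun g _ => a * (g ^ 2 + 4 * m ^ 2)) g = 4 * π * a * (g ^ 2 + 4 * m ^ 2) := by
  rw [totalXsec]
  rw [show (∫ Θ in (0:ℝ)..π, a * (g ^ 2 + 4 * m ^ 2) * Real.sin Θ)
      = a * (g ^ 2 + 4 * m ^ 2) * ∫ Θ in (0:ℝ)..π, Real.sin Θ from
    intervalIntegral.integral_const_mul _ _]
  rw [integral_sin]
  simp [Real.cos_pi]
  ring

omit hm in
lemma continuous_energy : Continuous (energy m) :=
  Real.continuous_sqrt.comp ((continuous_norm.pow 2).add continuous_const)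

omit hm in
lemma continuous_relMom (p : EuclideanSpace ℝ (Fin 3)) : Continuous (relMom m p) := by
  apply Real.continuous_sqrt.comp
  exact (continuous_const.mul (((continuous_const.mul continuous_energy).sub
    (continuous_const.inner continuous_id)).sub continuous_const))

end aux

set_option maxHeartbeats 2000000 in
/-- for the low-energy four-fermion electroweak cross-section
`σ(g,Θ) = a(g² + 4m²)` the interaction is hard: `ν(p) ≥ ν₀ · E(p)/m`, in particular
`ν` is bounded away from zero. -/
theorem four_fermion_hard (m β a : ℝ) (hm : 0 < m) (hβ : 0 < β) (ha : 0 < a) :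
    ∃ ν₀ : ℝ, 0 < ν₀ ∧
      (∀ p : EuclideanSpace ℝ (Fin 3),
        ν₀ * energy m p / m ≤ collFreq m β (fun g _ => a * (g ^ 2 + 4 * m ^ 2)) p) ∧
      (∀ p : EuclideanSpace ℝ (Fin 3),
        ν₀ ≤ collFreq m β (fun g _ => a * (g ^ 2 + 4 * m ^ 2)) p) := by
  -- basic constants
  set E₂ : ℝ := Real.sqrt (4 + m ^ 2) with hE₂def
  have hE₂pos : 0 < E₂ := Real.sqrt_pos.mpr (by positivity)
  set c₁ : ℝ := 2 * (Real.sqrt (1 + m ^ 2) - m) with hc₁def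
  have hc₁pos : 0 < c₁ := by
    have h1 : m < Real.sqrt (1 + m ^ 2) := by
      have : m ^ 2 < 1 + m ^ 2 := by linarith
      nlinarith [Real.sq_sqrt (show (0:ℝ) ≤ 1 + m ^ 2 by positivity),
        Real.sqrt_nonneg (1 + m ^ 2)]
    simp only [hc₁def]; linarith
  -- the reference annulus
  set S : Set (EuclideanSpace ℝ (Fin 3)) := {q | 1 ≤ ‖q‖ ∧ ‖q‖ ≤ 2} with hSdef
  have hSmeas : MeasurableSet S := by
    have : IsClosed S :=
      (isClosed_le continuous_const continuous_norm).inter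
        (isClosed_le continuous_norm continuous_const)
    exact this.measurableSet
  have hSsub : S ⊆ Metric.closedBall 0 2 := by
    intro q hq
    simpa [Metric.mem_closedBall, dist_eq_norm] using hq.2
  have hSfin : volume S ≠ ⊤ :=
    ((measure_mono hSsub).trans_lt (measure_closedBall_lt_top)).ne
  have hSpos : 0 < volume S := by
    have hc : ‖(EuclideanSpace.single (0 : Fin 3) (3/2 : ℝ))‖ = 3/2 := by
      simp [EuclideanSpace.norm_single]
    refine lt_of_lt_of_le (Metric.measure_ball_pos volume
      (EuclideanSpace.single (0 : Fin 3) (3/2 : ℝ)) (show (0:ℝ) < 1/2 by norm_num))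
      (measure_mono ?_)
    intro x hx
    rw [Metric.mem_ball, dist_eq_norm] at hx
    have h2 := abs_norm_sub_norm_le x (EuclideanSpace.single (0 : Fin 3) (3/2 : ℝ))
    rw [abs_le] at h2
    constructor
    · rw [hc] at h2; linarith [h2.1]
    · rw [hc] at h2; linarith [h2.2]
  set κ : ℝ := (volume S).toReal / 2 with hκdef
  have hκpos : 0 < κ := by
    have := ENNReal.toReal_pos hSpos.ne' hSfin
    simp only [hκdef]; linarith
  -- the uniform constant
  set c₂ : ℝ := Real.exp (-β * E₂) / E₂ * (4 * π * a * c₁ ^ 2) with hc₂def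
  have hc₂pos : 0 < c₂ := by
    have := Real.exp_pos (-β * E₂)
    have := Real.pi_pos
    positivity
  set K : ℝ := 1 + 6 / β with hKdef
  have hK1 : 1 ≤ K := by
    have : 0 < 6 / β := by positivity
    simp only [hKdef]; linarith
  refine ⟨c₂ * κ * m, by positivity, ?_⟩
  have key : ∀ p : EuclideanSpace ℝ (Fin 3),
      c₂ * κ * energy m p ≤ collFreq m β (fun g _ => a * (g ^ 2 + 4 * m ^ 2)) p := by
    intro p
    have hEppos : 0 < energy m p := energy_pos hm p
    have hmEp : m ≤ energy m p := le_energy hm p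
    set Ep : ℝ := energy m p with hEpdef
    set F : EuclideanSpace ℝ (Fin 3) → ℝ := fun q =>
      Real.exp (-β * energy m q) / energy m q * relMom m p q *
        Real.sqrt (relMom m p q ^ 2 + 4 * m ^ 2) *
        (4 * π * a * (relMom m p q ^ 2 + 4 * m ^ 2)) with hFdef
    have hcoll : collFreq m β (fun g _ => a * (g ^ 2 + 4 * m ^ 2)) p
        = Ep⁻¹ * ∫ q : EuclideanSpace ℝ (Fin 3), F q := by
      simp only [collFreq, totalXsec_ff, hFdef, hEpdef]
    -- nonnegativity
    have hF0 : ∀ q, 0 ≤ F q := by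
      intro q
      have e1 : 0 ≤ Real.exp (-β * energy m q) / energy m q :=
        (div_pos (Real.exp_pos _) (energy_pos hm q)).le
      have e2 : 0 ≤ relMom m p q := relMom_nonneg hm p q
      have e3 : 0 ≤ Real.sqrt (relMom m p q ^ 2 + 4 * m ^ 2) := Real.sqrt_nonneg _
      have e4 : 0 ≤ 4 * π * a * (relMom m p q ^ 2 + 4 * m ^ 2) := by
        have := Real.pi_pos; positivity
      exact mul_nonneg (mul_nonneg (mul_nonneg e1 e2) e3) e4
    -- continuity
    have hFc : Continuous F := by
      have hE : Continuous (energy m) := continuous_energy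
      have hg : Continuous (relMom m p) := continuous_relMom p
      have h1 : Continuous fun q : EuclideanSpace ℝ (Fin 3) =>
          Real.exp (-β * energy m q) / energy m q :=
        (Real.continuous_exp.comp (continuous_const.mul hE)).div hE
          (fun q => (energy_pos hm q).ne')
      have h2 : Continuous fun q : EuclideanSpace ℝ (Fin 3) =>
          Real.sqrt (relMom m p q ^ 2 + 4 * m ^ 2) :=
        Real.continuous_sqrt.comp ((hg.pow 2).add continuous_const)
      have h3 : Continuous fun q : EuclideanSpace ℝ (Fin 3) =>
          4 * π * a * (relMom m p q ^ 2 + 4 * m ^ 2) :=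
        continuous_const.mul ((hg.pow 2).add continuous_const)
      exact ((h1.mul hg).mul h2).mul h3
    -- integrability via domination
    set D : ℝ := 192 * π * a * Ep ^ 2 / m * ((1 + m) ^ 2 * K ^ 6) with hDdef
    have hbound : ∀ q, ‖F q‖ ≤ D * (1 + ‖q‖) ^ (-(4:ℝ)) := by
      intro q
      set x : ℝ := ‖q‖ with hxdef
      have hx0 : 0 ≤ x := norm_nonneg q
      have hEqpos : 0 < energy m q := energy_pos hm q
      have hmEq : m ≤ energy m q := le_energy hm q
      have hxEq : x ≤ energy m q := norm_le_energy hm q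
      have hEqx : energy m q ≤ x + m := energy_le hm q
      set Eqq : ℝ := energy m q with hEqdef
      set g : ℝ := relMom m p q with hgdef
      have hg0 : 0 ≤ g := relMom_nonneg hm p q
      have hgsq : g ^ 2 ≤ 4 * (Ep * Eqq) := relMom_sq_le hm p q
      set s : ℝ := Real.sqrt (g ^ 2 + 4 * m ^ 2) with hsdef
      have hs0 : 0 ≤ s := Real.sqrt_nonneg _
      have hssq : s ^ 2 = g ^ 2 + 4 * m ^ 2 := Real.sq_sqrt (by positivity)
      have hm2 : m ^ 2 ≤ Ep * Eqq := by nlinarith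
      have hgs : g * s ≤ 6 * (Ep * Eqq) := by
        apply le_of_sq_le_sq' (mul_nonneg hg0 hs0) (by positivity)
        have : (g * s) ^ 2 = g ^ 2 * s ^ 2 := by ring
        rw [this, hssq]
        nlinarith [sq_nonneg g, mul_pos hEppos hEqpos]
      have hT : 4 * π * a * (g ^ 2 + 4 * m ^ 2) ≤ 32 * π * a * (Ep * Eqq) := by
        have hpi := Real.pi_pos
        have h8 : g ^ 2 + 4 * m ^ 2 ≤ 8 * (Ep * Eqq) := by nlinarith
        calc 4 * π * a * (g ^ 2 + 4 * m ^ 2) ≤ 4 * π * a * (8 * (Ep * Eqq)) :=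
              mul_le_mul_of_nonneg_left h8 (by positivity)
          _ = 32 * π * a * (Ep * Eqq) := by ring
      have hediv : Real.exp (-β * Eqq) / Eqq ≤ Real.exp (-β * Eqq) / m := by
        apply div_le_div_of_nonneg_left (Real.exp_pos _).le hm hmEq
      have h1 : F q ≤ Real.exp (-β * Eqq) / m * (6 * (Ep * Eqq)) * (32 * π * a * (Ep * Eqq)) := by
        have hFq : F q = Real.exp (-β * Eqq) / Eqq * (g * s) * (4 * π * a * (g ^ 2 + 4 * m ^ 2)) := by
          simp only [hFdef, ← hEqdef, ← hgdef, ← hsdef]; ring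
        rw [hFq]
        apply mul_le_mul (mul_le_mul hediv hgs (mul_nonneg hg0 hs0) (by positivity)) hT
        · have := Real.pi_pos; positivity
        · positivity
      have h2 : Real.exp (-β * Eqq) / m * (6 * (Ep * Eqq)) * (32 * π * a * (Ep * Eqq))
          = 192 * π * a * Ep ^ 2 / m * (Eqq ^ 2 * Real.exp (-β * Eqq)) := by ring
      have h3 : Eqq ^ 2 * Real.exp (-β * Eqq) ≤ (x + m) ^ 2 * Real.exp (-β * x) := by
        apply mul_le_mul
        · exact pow_le_pow_left₀ hEqpos.le hEqx 2
        · exact Real.exp_le_exp.mpr (by nlinarith)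
        · exact (Real.exp_pos _).le
        · positivity
      have hKe : 1 + x ≤ K * Real.exp (β * x / 6) := by
        have hexp : 1 + β * x / 6 ≤ Real.exp (β * x / 6) := by
          have := Real.add_one_le_exp (β * x / 6); linarith
        have hfld : (6 / β) * (β * x / 6) = x := by field_simp
        have hstep : 1 + x ≤ K * (1 + β * x / 6) := by
          have hb : 0 ≤ 6 / β := by positivity
          have : K * (1 + β * x / 6) = 1 + β * x / 6 + 6 / β + (6 / β) * (β * x / 6) := by
            simp only [hKdef]; ring
          rw [this, hfld]
          have : 0 ≤ β * x / 6 := by positivity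
          linarith
        calc 1 + x ≤ K * (1 + β * x / 6) := hstep
          _ ≤ K * Real.exp (β * x / 6) := by
              apply mul_le_mul_of_nonneg_left hexp (by linarith)
      have h16 : (1 + x) ^ 6 ≤ K ^ 6 * Real.exp (β * x) := by
        calc (1 + x) ^ 6 ≤ (K * Real.exp (β * x / 6)) ^ 6 :=
              pow_le_pow_left₀ (by linarith) hKe 6
          _ = K ^ 6 * Real.exp (β * x / 6) ^ 6 := by rw [mul_pow]
          _ = K ^ 6 * Real.exp (β * x) := by
              have hee : Real.exp (β * x / 6) ^ 6 = Real.exp (β * x) := by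
                rw [← Real.exp_nat_mul]
                congr 1
                push_cast
                ring
              rw [hee]
      have hxm : (x + m) ^ 2 ≤ (1 + m) ^ 2 * (1 + x) ^ 2 := by
        have hb : x + m ≤ (1 + m) * (1 + x) := by nlinarith
        calc (x + m) ^ 2 ≤ ((1 + m) * (1 + x)) ^ 2 := by
              apply pow_le_pow_left₀ (by positivity) hb
          _ = (1 + m) ^ 2 * (1 + x) ^ 2 := by ring
      have h4 : (x + m) ^ 2 * Real.exp (-β * x) ≤ (1 + m) ^ 2 * K ^ 6 * (1 + x) ^ (-(4:ℝ)) := by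
        have hrw : (1 + x) ^ (-(4:ℝ)) = ((1 + x) ^ (4:ℕ))⁻¹ := by
          rw [show (-(4:ℝ)) = -((4:ℕ):ℝ) by norm_num, Real.rpow_neg (by linarith),
            Real.rpow_natCast]
        rw [hrw, show (-β * x) = -(β * x) by ring, Real.exp_neg,
          ← div_eq_mul_inv, ← div_eq_mul_inv]
        rw [div_le_div_iff₀ (Real.exp_pos _) (by positivity)]
        calc (x + m) ^ 2 * (1 + x) ^ (4:ℕ)
            ≤ (1 + m) ^ 2 * (1 + x) ^ 2 * (1 + x) ^ (4:ℕ) :=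
              mul_le_mul_of_nonneg_right hxm (by positivity)
          _ = (1 + m) ^ 2 * (1 + x) ^ 6 := by ring
          _ ≤ (1 + m) ^ 2 * (K ^ 6 * Real.exp (β * x)) :=
              mul_le_mul_of_nonneg_left h16 (by positivity)
          _ = (1 + m) ^ 2 * K ^ 6 * Real.exp (β * x) := by ring
      have hC0 : (0:ℝ) ≤ 192 * π * a * Ep ^ 2 / m := by
        have := Real.pi_pos; positivity
      rw [Real.norm_eq_abs, abs_of_nonneg (hF0 q)]
      calc F q ≤ 192 * π * a * Ep ^ 2 / m * (Eqq ^ 2 * Real.exp (-β * Eqq)) := by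
            rw [← h2]; exact h1
        _ ≤ 192 * π * a * Ep ^ 2 / m * ((x + m) ^ 2 * Real.exp (-β * x)) :=
            mul_le_mul_of_nonneg_left h3 hC0
        _ ≤ 192 * π * a * Ep ^ 2 / m * ((1 + m) ^ 2 * K ^ 6 * (1 + x) ^ (-(4:ℝ))) :=
            mul_le_mul_of_nonneg_left h4 hC0
        _ = D * (1 + x) ^ (-(4:ℝ)) := by simp only [hDdef]; ring
    have hGint : Integrable (fun q : EuclideanSpace ℝ (Fin 3) => D * (1 + ‖q‖) ^ (-(4:ℝ))) := by
      apply Integrable.const_mul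
      apply integrable_one_add_norm
      rw [finrank_euclideanSpace_fin]; norm_num
    have hFint : Integrable F :=
      Integrable.mono' hGint hFc.aestronglyMeasurable (Filter.Eventually.of_forall hbound)
    -- the good region
    set A : Set (EuclideanSpace ℝ (Fin 3)) := {q | ⟪p, q⟫ ≤ 0} ∩ S with hAdef
    have hAmeas : MeasurableSet A := by
      refine (IsClosed.measurableSet ?_).inter hSmeas
      exact isClosed_le (continuous_const.inner continuous_id) continuous_const
    have hAfin : volume A ≠ ⊤ :=
      ((measure_mono (Set.inter_subset_right.trans hSsub)).trans_lt
        measure_closedBall_lt_top).ne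
    have hAhalf : κ ≤ (volume A).toReal := by
      have hsub : S ⊆ A ∪ (-A) := by
        intro q hq
        rcases le_total (⟪p, q⟫ : ℝ) 0 with h | h
        · exact Or.inl ⟨h, hq⟩
        · refine Or.inr ?_
          rw [Set.mem_neg]
          refine ⟨?_, ?_, ?_⟩
          · simp only [Set.mem_setOf_eq, inner_neg_right]; linarith
          · rw [norm_neg]; exact hq.1
          · rw [norm_neg]; exact hq.2
      have hle : volume S ≤ volume A + volume A := by
        calc volume S ≤ volume (A ∪ (-A)) := measure_mono hsub
          _ ≤ volume A + volume (-A) := measure_union_le _ _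
          _ = volume A + volume A := by rw [Measure.measure_neg]
      have hle2 : (volume S).toReal ≤ 2 * (volume A).toReal := by
        have := ENNReal.toReal_le_toReal hSfin (by
          exact ENNReal.add_ne_top.mpr ⟨hAfin, hAfin⟩)
        have h := this.mpr hle
        rwa [ENNReal.toReal_add hAfin hAfin, ← two_mul] at h
      simp only [hκdef]; linarith
    -- lower bound on A
    have hlow : ∀ q ∈ A, c₂ * Ep ^ 2 ≤ F q := by
      rintro q ⟨hinner, hq1, hq2⟩
      simp only [Set.mem_setOf_eq] at hinner
      have hEqpos : 0 < energy m q := energy_pos hm q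
      set Eqq : ℝ := energy m q with hEqdef
      have hEqlow : Real.sqrt (1 + m ^ 2) ≤ Eqq := by
        simp only [hEqdef, energy]
        exact Real.sqrt_le_sqrt (by nlinarith)
      have hEqhigh : Eqq ≤ E₂ := by
        simp only [hEqdef, energy, hE₂def]
        exact Real.sqrt_le_sqrt (by nlinarith)
      set g : ℝ := relMom m p q with hgdef
      have hg0 : 0 ≤ g := relMom_nonneg hm p q
      set s : ℝ := Real.sqrt (g ^ 2 + 4 * m ^ 2) with hsdef
      have hs0 : 0 ≤ s := Real.sqrt_nonneg _
      have hgsq : c₁ * Ep ≤ g ^ 2 := by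
        have hrm : g ^ 2 = 2 * (Ep * Eqq - ⟪p, q⟫ - m ^ 2) := relMom_sq hm p q
        rw [hrm]
        have h1 : Ep * Real.sqrt (1 + m ^ 2) ≤ Ep * Eqq :=
          mul_le_mul_of_nonneg_left hEqlow hEppos.le
        have h2 : m * m ≤ m * Ep := mul_le_mul_of_nonneg_left hmEp hm.le
        simp only [hc₁def]
        nlinarith [h1, h2, hinner]
      have hslow : g ≤ s := by
        rw [hsdef, show g = Real.sqrt (g ^ 2) from (Real.sqrt_sq hg0).symm]
        exact Real.sqrt_le_sqrt (by nlinarith [Real.sq_sqrt (sq_nonneg g)])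
      have hediv : Real.exp (-β * E₂) / E₂ ≤ Real.exp (-β * Eqq) / Eqq := by
        apply div_le_div₀ (Real.exp_pos _).le
        · exact Real.exp_le_exp.mpr (by nlinarith)
        · exact hEqpos
        · exact hEqhigh
      have hprod : 4 * π * a * (c₁ * Ep) ^ 2 ≤ g * s * (4 * π * a * (g ^ 2 + 4 * m ^ 2)) := by
        have hpi := Real.pi_pos
        have hA1 : 4 * π * a * (c₁ * Ep) ^ 2 ≤ 4 * π * a * (g ^ 2) ^ 2 := by
          apply mul_le_mul_of_nonneg_left _ (by positivity)
          exact pow_le_pow_left₀ (by positivity) hgsq 2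
        have hA2 : 4 * π * a * (g ^ 2) ^ 2 ≤ g * s * (4 * π * a * (g ^ 2 + 4 * m ^ 2)) := by
          have hrw : 4 * π * a * (g ^ 2) ^ 2 = g * g * (4 * π * a * g ^ 2) := by ring
          rw [hrw]
          apply mul_le_mul
          · exact mul_le_mul_of_nonneg_left hslow hg0
          · apply mul_le_mul_of_nonneg_left _ (by positivity)
            nlinarith
          · positivity
          · exact mul_nonneg hg0 hs0
        linarith
      have hFq : F q = Real.exp (-β * Eqq) / Eqq *
          (g * s * (4 * π * a * (g ^ 2 + 4 * m ^ 2))) := by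
        simp only [hFdef, ← hEqdef, ← hgdef, ← hsdef]; ring
      have hc₂Ep : c₂ * Ep ^ 2 = Real.exp (-β * E₂) / E₂ * (4 * π * a * (c₁ * Ep) ^ 2) := by
        simp only [hc₂def]; ring
      rw [hFq, hc₂Ep]
      apply mul_le_mul hediv hprod
      · have := Real.pi_pos; positivity
      · exact (div_pos (Real.exp_pos _) hEqpos).le
    -- put everything together
    have hset : c₂ * Ep ^ 2 * (volume A).toReal ≤ ∫ q in A, F q := by
      have h := setIntegral_ge_of_const_le hAmeas hAfin hlow hFint.integrableOn
      have e : volume.real A = (volume A).toReal := rfl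
      rw [smul_eq_mul, e] at h; linarith
    have hfull : (∫ q in A, F q) ≤ ∫ q, F q :=
      setIntegral_le_integral hFint (Filter.Eventually.of_forall hF0)
    have hInt : c₂ * κ * Ep ^ 2 ≤ ∫ q, F q := by
      have h1 : c₂ * κ * Ep ^ 2 ≤ c₂ * Ep ^ 2 * (volume A).toReal := by
        have : c₂ * κ * Ep ^ 2 = (c₂ * Ep ^ 2) * κ := by ring
        rw [this]
        exact mul_le_mul_of_nonneg_left hAhalf (by positivity)
      linarith
    rw [hcoll]
    have hfin : Ep⁻¹ * (c₂ * κ * Ep ^ 2) = c₂ * κ * Ep := by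
      field_simp
    calc c₂ * κ * Ep = Ep⁻¹ * (c₂ * κ * Ep ^ 2) := hfin.symm
      _ ≤ Ep⁻¹ * ∫ q, F q := by
          apply mul_le_mul_of_nonneg_left hInt (by positivity)
  constructor
  · intro p
    have h := key p
    have : c₂ * κ * m * energy m p / m = c₂ * κ * energy m p := by
      field_simp
    rw [this]
    exact h
  · intro p
    have h := key p
    have h2 : c₂ * κ * m ≤ c₂ * κ * energy m p :=
      mul_le_mul_of_nonneg_left (le_energy hm p) (by positivity)
    linarith
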